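/- Fix an integer N ≥ 2 and consider the polynomial ring ℂ[y_{ij} : 1 ≤ i < j ≤ N], with the conventions y_{ji} := −y_{ij} for i < j and y_{ii} := 0 (coordinates on skew-symmetric N×N matrices). Let (P_{ab}) be the antisymmetric family of polynomials determined on generators by P(y_{ij}, y_{lm}) = (1/2)(sign(l−j) + sign(m−i))·y_{il}y_{jm} − (1/2)(sign(l−i) + sign(m−j))·y_{im}y_{jl}, where sign(k) ∈ {−1,0,1} is the sign of the integer k. Then the associated bracket {f,g} = Σ_{a,b} P_{ab}·(∂f/∂x_a)·(∂g/∂x_b) satisfies the Jacobi identity for all polynomials f, g, h, i.e. it is a Poisson bracket. (This is the Poisson structure of §5.6(b) of the paper, from the D-type Hermitian symmetric space SO_{2N}/P; it is the quasiclassical limit of Strickland's algebra of quantum antisymmetric matrices.) -/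
import Mathlib


open MvPolynomial

/-- The bracket on a multivariate polynomial ring associated to a family of
polynomials `P a b`: `{f, g} = Σ_{a,b} P a b · ∂f/∂x_a · ∂g/∂x_b`. -/
noncomputable def polyBracket {σ : Type*} [Fintype σ]
    (P : σ → σ → MvPolynomial σ ℂ) (f g : MvPolynomial σ ℂ) : MvPolynomial σ ℂ :=
  ∑ a : σ, ∑ b : σ, P a b * pderiv a f * pderiv b g

namespace StmtA

/-- Index set for the variables `y_{ij}`, `1 ≤ i < j ≤ N` (coordinates on
skew-symmetric `N × N` matrices). -/
abbrev Idx (N : ℕ) := {p : Fin N × Fin N // p.1 < p.2}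

variable {N : ℕ}

/-- The variable `y_{ij}`, with the conventions `y_{ji} = -y_{ij}` for `i < j`
and `y_{ii} = 0`. -/
noncomputable def y (i j : Fin N) : MvPolynomial (Idx N) ℂ :=
  if h : i < j then X ⟨(i, j), h⟩
  else if h' : j < i then -X ⟨(j, i), h'⟩ else 0

/-- `sg i j` is the sign of `j - i`. -/
def sg (i j : Fin N) : ℂ := if i < j then 1 else if j < i then -1 else 0

/-- The antisymmetric family of polynomials determined on generators by
`P(y_{ij}, y_{lm}) = (1/2)(sign(l−j) + sign(m−i))·y_{il}y_{jm} − (1/2)(sign(l−i) + sign(m−j))·y_{im}y_{jl}`. -/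
noncomputable def P (a b : Idx N) : MvPolynomial (Idx N) ℂ :=
  C ((sg a.1.2 b.1.1 + sg a.1.1 b.1.2) * (1/2)) * y a.1.1 b.1.1 * y a.1.2 b.1.2 -
    C ((sg a.1.1 b.1.1 + sg a.1.2 b.1.2) * (1/2)) * y a.1.1 b.1.2 * y a.1.2 b.1.1

end StmtA

/-! ### Auxiliary machinery: general properties of `polyBracket` -/

namespace PBAux

variable {σ : Type*} [Fintype σ] (P : σ → σ → MvPolynomial σ ℂ)

lemma pb_add_left (f g h : MvPolynomial σ ℂ) :
    polyBracket P (f + g) h = polyBracket P f h + polyBracket P g h := by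
  simp only [polyBracket, map_add, add_mul, mul_add, Finset.sum_add_distrib]

lemma pb_add_right (f g h : MvPolynomial σ ℂ) :
    polyBracket P f (g + h) = polyBracket P f g + polyBracket P f h := by
  simp only [polyBracket, map_add, add_mul, mul_add, Finset.sum_add_distrib]

lemma pb_C_left (r : ℂ) (g : MvPolynomial σ ℂ) : polyBracket P (C r) g = 0 := by
  simp [polyBracket, pderiv_C]

lemma pb_C_right (r : ℂ) (f : MvPolynomial σ ℂ) : polyBracket P f (C r) = 0 := by
  simp [polyBracket, pderiv_C]

lemma pb_zero_right (f : MvPolynomial σ ℂ) : polyBracket P f 0 = 0 := by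
  simp [polyBracket]

lemma pb_neg_right (f g : MvPolynomial σ ℂ) : polyBracket P f (-g) = - polyBracket P f g := by
  simp [polyBracket, Finset.sum_neg_distrib]

lemma pb_mul_left (f₁ f₂ g : MvPolynomial σ ℂ) :
    polyBracket P (f₁ * f₂) g = f₁ * polyBracket P f₂ g + f₂ * polyBracket P f₁ g := by
  have e : ∀ a b : σ, P a b * pderiv a (f₁ * f₂) * pderiv b g
      = f₁ * (P a b * pderiv a f₂ * pderiv b g) + f₂ * (P a b * pderiv a f₁ * pderiv b g) := by
    intro a b; rw [pderiv_mul]; ring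
  simp only [polyBracket, e, Finset.sum_add_distrib, Finset.mul_sum]

lemma pb_mul_right (f g₁ g₂ : MvPolynomial σ ℂ) :
    polyBracket P f (g₁ * g₂) = g₁ * polyBracket P f g₂ + g₂ * polyBracket P f g₁ := by
  have e : ∀ a b : σ, P a b * pderiv a f * pderiv b (g₁ * g₂)
      = g₁ * (P a b * pderiv a f * pderiv b g₂) + g₂ * (P a b * pderiv a f * pderiv b g₁) := by
    intro a b; rw [pderiv_mul]; ring
  simp only [polyBracket, e, Finset.sum_add_distrib, Finset.mul_sum]

lemma pb_Cmul_right (r : ℂ) (f g : MvPolynomial σ ℂ) :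
    polyBracket P f (C r * g) = C r * polyBracket P f g := by
  have e : ∀ a b : σ, P a b * pderiv a f * pderiv b (C r * g)
      = C r * (P a b * pderiv a f * pderiv b g) := by
    intro a b; rw [pderiv_C_mul]; ring
  simp only [polyBracket, e, Finset.mul_sum]

lemma pb_antisymm (hP : ∀ a b, P a b = - P b a) (f g : MvPolynomial σ ℂ) :
    polyBracket P f g = - polyBracket P g f := by
  calc polyBracket P f g = ∑ b : σ, ∑ a : σ, P a b * pderiv a f * pderiv b g :=
        Finset.sum_comm
    _ = ∑ b : σ, ∑ a : σ, -(P b a * pderiv b g * pderiv a f) := by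
        refine Finset.sum_congr rfl fun b _ => Finset.sum_congr rfl fun a _ => ?_
        rw [hP a b]; ring
    _ = - polyBracket P g f := by
        simp [polyBracket, Finset.sum_neg_distrib]

lemma pb_X_X [DecidableEq σ] (a b : σ) : polyBracket P (X a) (X b) = P a b := by
  simp [polyBracket, pderiv_X, Pi.single_apply, Finset.sum_ite_eq, mul_ite, ite_mul]

/-- The Jacobiator of the bracket. -/
noncomputable def Jac (f g h : MvPolynomial σ ℂ) : MvPolynomial σ ℂ :=
  polyBracket P f (polyBracket P g h) + polyBracket P g (polyBracket P h f) +
    polyBracket P h (polyBracket P f g)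

lemma jac_rot (f g h : MvPolynomial σ ℂ) : Jac P f g h = Jac P g h f := by
  unfold Jac; ring

lemma jac_C (r : ℂ) (g h : MvPolynomial σ ℂ) : Jac P (C r) g h = 0 := by
  unfold Jac
  rw [pb_C_left, pb_C_right, pb_zero_right, pb_C_left, pb_zero_right]
  simp

lemma jac_add_left (f₁ f₂ g h : MvPolynomial σ ℂ) :
    Jac P (f₁ + f₂) g h = Jac P f₁ g h + Jac P f₂ g h := by
  unfold Jac
  rw [pb_add_left, pb_add_right, pb_add_left, pb_add_right, pb_add_right]
  ring

lemma jac_mul_left (hP : ∀ a b, P a b = - P b a) (f₁ f₂ g h : MvPolynomial σ ℂ) :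
    Jac P (f₁ * f₂) g h = f₁ * Jac P f₂ g h + f₂ * Jac P f₁ g h := by
  unfold Jac
  rw [pb_mul_left, pb_mul_right, pb_add_right, pb_mul_right, pb_mul_right,
    pb_mul_left, pb_add_right, pb_mul_right, pb_mul_right,
    pb_antisymm P hP f₂ g, pb_antisymm P hP f₁ g]
  rw [pb_neg_right, pb_neg_right]
  ring

/-- If the Jacobi identity holds on generators (and `P` is antisymmetric),
it holds everywhere. -/
lemma jac_all (hP : ∀ a b, P a b = - P b a) [DecidableEq σ]
    (hX : ∀ a b c : σ, Jac P (X a) (X b) (X c) = 0)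
    (f g h : MvPolynomial σ ℂ) : Jac P f g h = 0 := by
  have step1 : ∀ (b c : σ) (f : MvPolynomial σ ℂ), Jac P f (X b) (X c) = 0 := by
    intro b c f
    induction f using MvPolynomial.induction_on with
    | C r => exact jac_C P r _ _
    | add p q hp hq => rw [jac_add_left, hp, hq, add_zero]
    | mul_X p n hp => rw [jac_mul_left P hP, hp, hX n b c, mul_zero, mul_zero, add_zero]
  have step2 : ∀ (c : σ) (f g : MvPolynomial σ ℂ), Jac P f g (X c) = 0 := by
    intro c f g
    rw [show Jac P f g (X c) = Jac P g (X c) f by rw [jac_rot]]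
    induction g using MvPolynomial.induction_on with
    | C r => exact jac_C P r _ _
    | add p q hp hq => rw [jac_add_left, hp, hq, add_zero]
    | mul_X p n hp =>
        rw [jac_mul_left P hP, hp, mul_zero, add_zero,
          show Jac P (X n) (X c) f = Jac P f (X n) (X c) by rw [jac_rot, jac_rot],
          step1, mul_zero]
  rw [show Jac P f g h = Jac P h f g by rw [jac_rot, jac_rot]]
  induction h using MvPolynomial.induction_on with
  | C r => exact jac_C P r _ _
  | add p q hp hq => rw [jac_add_left, hp, hq, add_zero]
  | mul_X p n hp =>
      rw [jac_mul_left P hP, hp, mul_zero, add_zero,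
        show Jac P (X n) f g = Jac P f g (X n) by rw [jac_rot],
        step2, mul_zero]

end PBAux

/-! ### Concrete computations for the bracket of antisymmetric matrices -/

namespace StmtA

variable {N : ℕ}

lemma sg_rev (u v : Fin N) : sg v u = - sg u v := by
  rcases lt_trichotomy u v with h | rfl | h
  · simp [sg, h, asymm h]
  · simp [sg]
  · simp [sg, h, asymm h]

lemma y_rev (u v : Fin N) : y v u = - y u v := by
  rcases lt_trichotomy u v with h | rfl | h
  · simp [y, h, asymm h]
  · simp [y]
  · simp [y, h, asymm h]

lemma y_diag (u : Fin N) : y u u = 0 := by simp [y]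

/-- The bracket polynomial `{y_ij, y_lm}` for arbitrary indices. -/
noncomputable def B (i j l m : Fin N) : MvPolynomial (Idx N) ℂ :=
  C ((sg j l + sg i m) * (1/2)) * y i l * y j m -
    C ((sg i l + sg j m) * (1/2)) * y i m * y j l

lemma P_eq (a b : Idx N) : P a b = B a.1.1 a.1.2 b.1.1 b.1.2 := rfl

lemma B_swap_right (i j l m : Fin N) : B i j m l = - B i j l m := by
  simp only [B, map_mul, map_add]; ring

lemma B_diag_right (i j l : Fin N) : B i j l l = 0 := by
  simp only [B, map_mul, map_add]; ring

lemma B_flip (i j l m : Fin N) : B l m i j = - B i j l m := by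
  rw [show B l m i j = C ((sg m i + sg l j) * (1/2)) * y l i * y m j -
      C ((sg l i + sg m j) * (1/2)) * y l j * y m i from rfl,
    sg_rev i m, sg_rev j l, sg_rev i l, sg_rev j m,
    y_rev i l, y_rev j m, y_rev j l, y_rev i m]
  simp only [B, map_mul, map_add, map_neg]
  ring

lemma P_antisymm (a b : Idx N) : P a b = - P b a := by
  rw [P_eq, P_eq, B_flip]

open PBAux

lemma pb_X_y (i j : Fin N) (hij : i < j) (r s : Fin N) :
    polyBracket P (X ⟨(i,j),hij⟩) (y r s) = B i j r s := by
  rcases lt_trichotomy r s with h | h | h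
  · rw [show y r s = (X (⟨(r,s),h⟩ : Idx N) : MvPolynomial _ ℂ) from by simp [y, h],
      pb_X_X]
    rfl
  · subst h; rw [y_diag, pb_zero_right, B_diag_right]
  · rw [show y r s = -(X (⟨(s,r),h⟩ : Idx N) : MvPolynomial _ ℂ) from by simp [y, h, asymm h],
      pb_neg_right, pb_X_X,
      show P ⟨(i,j),hij⟩ ⟨(s,r),h⟩ = B i j s r from rfl, B_swap_right i j s r]

lemma pb_X_B (i j : Fin N) (hij : i < j) (l m p q : Fin N) :
    polyBracket P (X ⟨(i,j),hij⟩) (B l m p q)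
      = C ((sg m p + sg l q) * (1/2)) * (B i j l p * y m q + y l p * B i j m q)
        - C ((sg l p + sg m q) * (1/2)) * (B i j l q * y m p + y l q * B i j m p) := by
  rw [show B l m p q = C ((sg m p + sg l q) * (1/2)) * y l p * y m q -
      C ((sg l p + sg m q) * (1/2)) * y l q * y m p from rfl,
    sub_eq_add_neg, pb_add_right, pb_neg_right, mul_assoc, mul_assoc,
    pb_Cmul_right, pb_Cmul_right, pb_mul_right, pb_mul_right,
    pb_X_y, pb_X_y, pb_X_y, pb_X_y]
  ring

lemma F_scalar {a b c : Fin N} (h : ¬(a = b ∧ b = c)) :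
    sg a c * sg b c + sg a b * sg a c - sg a b * sg b c = 1 := by
  rcases lt_trichotomy a b with h1 | h1 | h1 <;>
    rcases lt_trichotomy b c with h2 | h2 | h2 <;>
      rcases lt_trichotomy a c with h3 | h3 | h3 <;>
        (first
          | omega
          | (simp_all [sg, asymm, lt_irrefl]; try norm_num))

lemma F_poly {a b c : Fin N} (h : ¬(a = b ∧ b = c)) :
    C (sg a c) * C (sg b c) + C (sg a b) * C (sg a c) - C (sg a b) * C (sg b c)
      = (1 : MvPolynomial (Idx N) ℂ) := by
  rw [← map_mul, ← map_mul, ← map_mul, ← map_add, ← map_sub, F_scalar h, map_one]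

lemma pair_vanish (a b c d e f : Fin N) :
    ((C (sg a c) * C (sg b c) + C (sg a b) * C (sg a c) - C (sg a b) * C (sg b c))
      - (C (sg d f) * C (sg e f) + C (sg d e) * C (sg d f) - C (sg d e) * C (sg e f)))
      * (y a e * y d c * y b f + y a f * y d b * y e c)
      = (0 : MvPolynomial (Idx N) ℂ) := by
  by_cases h1 : a = b ∧ b = c
  · obtain ⟨rfl, rfl⟩ := h1
    rw [y_rev a e]
    ring
  · by_cases h2 : d = e ∧ e = f
    · obtain ⟨rfl, rfl⟩ := h2
      rw [y_rev d b]
      ring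
    · rw [F_poly h1, F_poly h2, sub_self, zero_mul]

set_option maxHeartbeats 2000000 in
/-- The Jacobi identity on generators. -/
lemma jac3 (a b c : Idx N) :
    polyBracket P (X a) (polyBracket P (X b) (X c)) +
      polyBracket P (X b) (polyBracket P (X c) (X a)) +
      polyBracket P (X c) (polyBracket P (X a) (X b)) = 0 := by
  obtain ⟨⟨i,j⟩,hij⟩ := a
  obtain ⟨⟨l,m⟩,hlm⟩ := b
  obtain ⟨⟨p,q⟩,hpq⟩ := c
  rw [pb_X_X, pb_X_X, pb_X_X,
    show P ⟨(l,m),hlm⟩ ⟨(p,q),hpq⟩ = B l m p q from rfl,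
    show P ⟨(p,q),hpq⟩ ⟨(i,j),hij⟩ = B p q i j from rfl,
    show P ⟨(i,j),hij⟩ ⟨(l,m),hlm⟩ = B i j l m from rfl,
    pb_X_B i j hij l m p q, pb_X_B l m hlm p q i j, pb_X_B p q hpq i j l m]
  simp only [B]
  simp only [sg_rev i l, sg_rev j l, sg_rev i m, sg_rev j m, sg_rev i p, sg_rev j p,
    sg_rev l p, sg_rev m p, sg_rev i q, sg_rev j q, sg_rev l q, sg_rev m q,
    y_rev i l, y_rev j l, y_rev i m, y_rev j m, y_rev i p, y_rev j p,
    y_rev l p, y_rev m p, y_rev i q, y_rev j q, y_rev l q, y_rev m q]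
  simp only [map_mul, map_add, map_neg]
  linear_combination (C ((1:ℂ)/2) * C ((1:ℂ)/2)) * pair_vanish i m p j l q
    + (C ((1:ℂ)/2) * C ((1:ℂ)/2)) * pair_vanish i l q j m p
    + (C ((1:ℂ)/2) * C ((1:ℂ)/2)) * pair_vanish j l p i m q
    + (C ((1:ℂ)/2) * C ((1:ℂ)/2)) * pair_vanish j m q i l p

end StmtA

/-- For `N ≥ 2`, the bracket on `ℂ[y_{ij} : 1 ≤ i < j ≤ N]` (coordinates on
skew-symmetric matrices, with `y_{ji} = -y_{ij}` and `y_{ii} = 0`) determined by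
`{y_{ij}, y_{lm}} = (1/2)(sign(l−j)+sign(m−i))·y_{il}y_{jm} − (1/2)(sign(l−i)+sign(m−j))·y_{im}y_{jl}`
satisfies the Jacobi identity, i.e. it is a Poisson bracket (the quasiclassical limit of
Strickland's quantum antisymmetric matrices). -/
theorem jacobi_quantum_antisymmetric_matrices (N : ℕ) (hN : 2 ≤ N)
    (f g h : MvPolynomial (StmtA.Idx N) ℂ) :
    polyBracket StmtA.P f (polyBracket StmtA.P g h) +
      polyBracket StmtA.P g (polyBracket StmtA.P h f) +
      polyBracket StmtA.P h (polyBracket StmtA.P f g) = 0 := by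
  have := PBAux.jac_all StmtA.P StmtA.P_antisymm
    (fun a b c => StmtA.jac3 a b c) f g h
  simpa [PBAux.Jac] using this
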